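/- For s = (s_1,...,s_n) ∈ ℝⁿ with s_i ≥ 0 for all i, and for every k ∈ {1,...,n}, the sum of the k largest entries of s satisfies Σ_{i=1}^k s_[i] = min_{λ ≥ 0} { kλ + Σ_{i=1}^n max(s_i − λ, 0) }, i.e. the infimum over λ ≥ 0 of kλ + Σ_{i=1}^n [s_i − λ]₊ is attained and equals the sum of the k largest entries. -/

import Mathlib

open Finset

/-- `sortedDesc v i` is the `i`-th largest entry of the tuple `v` (0-indexed). -/
noncomputable def sortedDesc {n : ℕ} (v : Fin n → ℝ) : Fin n → ℝ :=
  fun i => v (Tuple.sort v i.rev)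

lemma sortedDesc_antitone {n : ℕ} (v : Fin n → ℝ) : Antitone (sortedDesc v) := by
  intro i j hij
  exact Tuple.monotone_sort v (by simpa using Fin.rev_le_rev.mpr hij)

lemma sum_comp_sortedDesc {n : ℕ} (v : Fin n → ℝ) (f : ℝ → ℝ) :
    ∑ i, f (sortedDesc v i) = ∑ i, f (v i) :=
  Fintype.sum_equiv (Fin.revPerm.trans (Tuple.sort v)) _ _ (fun _ => rfl)

/-- **Variational formula for the sum of the k largest entries.** For a nonnegative
vector `s ∈ ℝⁿ` and `k ∈ {1,...,n}`, the sum of the `k` largest entries of `s`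
equals `min_{λ ≥ 0} { kλ + Σ_i max(s_i − λ, 0) }`, the minimum being attained. -/
theorem sum_topk_min_formula (n k : ℕ) (hk1 : 1 ≤ k) (hkn : k ≤ n)
    (s : Fin n → ℝ) (hs : ∀ i, 0 ≤ s i) :
    IsLeast ((fun l : ℝ => (k : ℝ) * l + ∑ i, max (s i - l) 0) '' Set.Ici (0 : ℝ))
      (∑ i ∈ Finset.univ.filter (fun i : Fin n => (i : ℕ) < k), sortedDesc s i) := by
  set t := sortedDesc s with ht
  have ht0 : ∀ i, 0 ≤ t i := fun i => hs _
  have hanti : Antitone t := sortedDesc_antitone s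
  set A : Finset (Fin n) := Finset.univ.filter (fun i : Fin n => (i : ℕ) < k) with hA
  have hcardA : A.card = k := by
    have : A = Finset.map (Fin.castLEEmb hkn) Finset.univ := by
      ext i
      simp only [hA, Finset.mem_filter, Finset.mem_univ, true_and, Finset.mem_map]
      constructor
      · intro h; exact ⟨⟨i, h⟩, rfl⟩
      · rintro ⟨j, rfl⟩; exact j.2
    rw [this, Finset.card_map, Finset.card_univ, Fintype.card_fin]
  have hk1n : k - 1 < n := lt_of_lt_of_le (Nat.sub_lt hk1 one_pos) hkn
  set l₀ : ℝ := t ⟨k - 1, hk1n⟩ with hl₀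
  have hl₀0 : 0 ≤ l₀ := ht0 _
  constructor
  · refine ⟨l₀, hl₀0, ?_⟩
    have hsplit : ∑ i, max (s i - l₀) 0 = ∑ i ∈ A, (t i - l₀) := by
      rw [← sum_comp_sortedDesc s (fun x => max (x - l₀) 0), ← ht]
      rw [← Finset.sum_filter_add_sum_filter_not Finset.univ (fun i : Fin n => (i : ℕ) < k)]
      rw [← hA]
      have h1 : ∀ i ∈ A, max (t i - l₀) 0 = t i - l₀ := by
        intro i hi
        simp only [hA, Finset.mem_filter] at hi
        have : l₀ ≤ t i := hanti (show i ≤ ⟨k - 1, hk1n⟩ from Nat.le_sub_one_of_lt hi.2)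
        exact max_eq_left (by linarith)
      have h2 : ∀ i ∈ Finset.univ.filter (fun i : Fin n => ¬ (i : ℕ) < k),
          max (t i - l₀) 0 = 0 := by
        intro i hi
        simp only [Finset.mem_filter, not_lt] at hi
        have : t i ≤ l₀ := hanti (by
          rw [Fin.le_def]; exact le_trans (Nat.sub_le k 1) hi.2)
        exact max_eq_right (by linarith)
      rw [Finset.sum_congr rfl h1, Finset.sum_congr rfl h2, Finset.sum_const_zero, add_zero]
    show (k : ℝ) * l₀ + ∑ i, max (s i - l₀) 0 = ∑ i ∈ A, t i
    rw [hsplit, Finset.sum_sub_distrib, Finset.sum_const, hcardA, nsmul_eq_mul]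
    ring
  · rintro x ⟨l, hl, rfl⟩
    have hrew : ∑ i, max (s i - l) 0 = ∑ i, max (t i - l) 0 :=
      (sum_comp_sortedDesc s (fun x => max (x - l) 0)).symm
    simp only [hrew]
    have h1 : ∑ i ∈ A, t i ≤ ∑ i ∈ A, (l + max (t i - l) 0) := by
      refine Finset.sum_le_sum fun i _ => ?_
      have := le_max_left (t i - l) 0
      linarith
    have h2 : ∑ i ∈ A, max (t i - l) 0 ≤ ∑ i, max (t i - l) 0 :=
      Finset.sum_le_sum_of_subset_of_nonneg (Finset.subset_univ A)
        (fun i _ _ => le_max_right _ _)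
    rw [Finset.sum_add_distrib, Finset.sum_const, hcardA, nsmul_eq_mul] at h1
    linarith
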